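/- Define F : (0,∞) → ℝ by F(ν) = −log ρ(ν), where ρ(ν) = 2(1 + 2√ν)/(9(1 + √ν)²(1 + ν)²) for 0 < ν ≤ 4 and ρ(ν) = (3ν² − 8)/(36(ν² − 1)²) for ν > 4 (these agree at ν = 4). Then F is three times differentiable on (0,∞), its third derivative is continuous on (0,∞)\{4}, and the third derivative has a jump discontinuity at ν = 4 (the one-sided limits at 4 differ). -/

import Mathlib

open Real Set Filter

noncomputable def rhoS5 : ℝ → ℝ := fun ν =>
  if ν ≤ 4 then 2 * (1 + 2 * Real.sqrt ν) / (9 * (1 + Real.sqrt ν) ^ 2 * (1 + ν) ^ 2)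
  else (3 * ν ^ 2 - 8) / (36 * (ν ^ 2 - 1) ^ 2)

noncomputable def freeEnergy5 : ℝ → ℝ := fun ν => -Real.log (rhoS5 ν)

/-! Auxiliary definitions: smooth pieces and their derivatives. -/

noncomputable def F1L : ℝ → ℝ := fun x =>
  ((1 + Real.sqrt x) * (1 + 2 * Real.sqrt x))⁻¹ + 2 * (1 + x)⁻¹

noncomputable def F1R : ℝ → ℝ := fun x => 4 * x / (x ^ 2 - 1) - 6 * x / (3 * x ^ 2 - 8)

noncomputable def F2L : ℝ → ℝ := fun x =>
  -((3 + 4 * Real.sqrt x) / (2 * Real.sqrt x * (1 + Real.sqrt x) ^ 2 * (1 + 2 * Real.sqrt x) ^ 2))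
    - 2 / (1 + x) ^ 2

noncomputable def F2R : ℝ → ℝ := fun x =>
  -(4 * (x ^ 2 + 1) / (x ^ 2 - 1) ^ 2) + (18 * x ^ 2 + 48) / (3 * x ^ 2 - 8) ^ 2

noncomputable def F3L : ℝ → ℝ := fun x =>
  (32 * Real.sqrt x ^ 3 + 54 * Real.sqrt x ^ 2 + 27 * Real.sqrt x + 3) /
      (4 * Real.sqrt x ^ 3 * (1 + Real.sqrt x) ^ 3 * (1 + 2 * Real.sqrt x) ^ 3)
    + 4 / (1 + x) ^ 3

noncomputable def F3R : ℝ → ℝ := fun x =>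
  8 * x * (x ^ 2 + 3) / (x ^ 2 - 1) ^ 3 - 108 * x * (x ^ 2 + 8) / (3 * x ^ 2 - 8) ^ 3

noncomputable def F1d (x : ℝ) : ℝ := if x ≤ 4 then F1L x else F1R x
noncomputable def F2d (x : ℝ) : ℝ := if x ≤ 4 then F2L x else F2R x
noncomputable def F3d (x : ℝ) : ℝ := if x ≤ 4 then F3L x else F3R x

noncomputable def gLeft : ℝ → ℝ := fun x =>
  Real.log 9 + 2 * Real.log (1 + Real.sqrt x) + 2 * Real.log (1 + x)
    - Real.log 2 - Real.log (1 + 2 * Real.sqrt x)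

noncomputable def gRight : ℝ → ℝ := fun x =>
  Real.log 36 + 2 * Real.log (x ^ 2 - 1) - Real.log (3 * x ^ 2 - 8)

lemma sqrt4 : Real.sqrt 4 = 2 := by
  rw [show (4 : ℝ) = 2 ^ 2 by norm_num, Real.sqrt_sq (by norm_num)]

lemma feq_left {x : ℝ} (hx : 0 < x) (hx4 : x ≤ 4) : freeEnergy5 x = gLeft x := by
  have hs0 : 0 ≤ Real.sqrt x := Real.sqrt_nonneg x
  have h1 : (1 + 2 * Real.sqrt x) ≠ 0 := by positivity
  have h2 : (1 + Real.sqrt x) ≠ 0 := by positivity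
  have h3 : (1 + x) ≠ 0 := by positivity
  unfold freeEnergy5 rhoS5 gLeft
  rw [if_pos hx4, Real.log_div (by positivity) (by positivity),
    Real.log_mul two_ne_zero h1, Real.log_mul (by positivity) (by positivity),
    Real.log_mul (by norm_num) (by positivity), Real.log_pow, Real.log_pow]
  push_cast
  ring

lemma feq_right {x : ℝ} (hx : 4 < x) : freeEnergy5 x = gRight x := by
  have h1 : (0:ℝ) < x ^ 2 - 1 := by nlinarith
  have h2 : (0:ℝ) < 3 * x ^ 2 - 8 := by nlinarith
  unfold freeEnergy5 rhoS5 gRight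
  rw [if_neg (not_le.mpr hx), Real.log_div h2.ne' (by positivity),
    Real.log_mul (by norm_num) (by positivity), Real.log_pow]
  push_cast
  ring

lemma feq4 : freeEnergy5 4 = gRight 4 := by
  have A : freeEnergy5 4 = Real.log (405 / 2) := by
    unfold freeEnergy5 rhoS5
    rw [if_pos le_rfl, sqrt4,
      show 2 * (1 + 2 * (2:ℝ)) / (9 * (1 + 2) ^ 2 * (1 + 4) ^ 2) = (405 / 2)⁻¹ by norm_num,
      Real.log_inv, neg_neg]
  have B : gRight 4 = Real.log (405 / 2) := by
    unfold gRight
    rw [show (405 / 2 : ℝ) = 36 * 15 ^ 2 / 40 by norm_num,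
      show (3 * (4:ℝ) ^ 2 - 8) = 40 by norm_num, show ((4:ℝ) ^ 2 - 1) = 15 by norm_num,
      Real.log_div (by positivity) (by norm_num),
      Real.log_mul (by norm_num) (by positivity), Real.log_pow]
    push_cast
    ring
  rw [A, B]

lemma hasDerivAt_gLeft {x : ℝ} (hx : 0 < x) : HasDerivAt gLeft (F1L x) x := by
  have hs0 : 0 < Real.sqrt x := Real.sqrt_pos.mpr hx
  set s := Real.sqrt x with hsdef
  have hd : HasDerivAt Real.sqrt (1 / (2 * s)) x := Real.hasDerivAt_sqrt hx.ne'
  have h1 : HasDerivAt (fun y => Real.log (1 + Real.sqrt y)) ((1 / (2 * s)) / (1 + s)) x :=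
    (hd.const_add 1).log (by positivity)
  have h2 : HasDerivAt (fun y : ℝ => Real.log (1 + y)) (1 / (1 + x)) x := by
    simpa using ((hasDerivAt_id x).const_add 1).log (by positivity)
  have h3 : HasDerivAt (fun y => Real.log (1 + 2 * Real.sqrt y))
      ((2 * (1 / (2 * s))) / (1 + 2 * s)) x :=
    ((hd.const_mul 2).const_add 1).log (by positivity)
  have H := ((((h1.const_mul 2).const_add (Real.log 9)).add (h2.const_mul 2)).sub_const
      (Real.log 2)).sub h3
  have hne1 : (1 + s) ≠ 0 := by positivity
  have hne2 : (1 + 2 * s) ≠ 0 := by positivity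
  have hne3 : (1 + x) ≠ 0 := by positivity
  refine H.congr_deriv (Eq.symm ?_)
  unfold F1L
  rw [← hsdef]
  field_simp
  ring

lemma hasDerivAt_gRight {x : ℝ} (h1 : x ^ 2 - 1 ≠ 0) (h2 : 3 * x ^ 2 - 8 ≠ 0) :
    HasDerivAt gRight (F1R x) x := by
  have ha : HasDerivAt (fun y : ℝ => y ^ 2 - 1) ((2:ℕ) * x ^ 1) x := by
    simpa using (hasDerivAt_pow 2 x).sub_const 1
  have hb : HasDerivAt (fun y : ℝ => 3 * y ^ 2 - 8) (3 * ((2:ℕ) * x ^ 1)) x := by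
    simpa using ((hasDerivAt_pow 2 x).const_mul 3).sub_const 8
  have H := (((ha.log h1).const_mul 2).const_add (Real.log 36)).sub (hb.log h2)
  refine H.congr_deriv (Eq.symm ?_)
  unfold F1R
  field_simp
  ring

lemma hasDerivAt_F1L {x : ℝ} (hx : 0 < x) : HasDerivAt F1L (F2L x) x := by
  have hs0 : 0 < Real.sqrt x := Real.sqrt_pos.mpr hx
  set s := Real.sqrt x with hsdef
  have hd : HasDerivAt Real.sqrt (1 / (2 * s)) x := Real.hasDerivAt_sqrt hx.ne'
  have hne1 : (1 + s) ≠ 0 := by positivity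
  have hne2 : (1 + 2 * s) ≠ 0 := by positivity
  have hne3 : (1 + x) ≠ 0 := by positivity
  have hh : HasDerivAt (fun y => (1 + Real.sqrt y) * (1 + 2 * Real.sqrt y))
      ((1 / (2 * s)) * (1 + 2 * s) + (1 + s) * (2 * (1 / (2 * s)))) x :=
    (hd.const_add 1).mul ((hd.const_mul 2).const_add 1)
  have hinv := hh.inv (by positivity)
  have h2 : HasDerivAt (fun y : ℝ => 2 * (1 + y)⁻¹) (2 * (-1 / (1 + x) ^ 2)) x := by
    have := (((hasDerivAt_id x).const_add 1).inv (by positivity)).const_mul 2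
    simpa using this
  have H := hinv.add h2
  refine H.congr_deriv (Eq.symm ?_)
  unfold F2L
  rw [← hsdef]
  field_simp
  ring

lemma hasDerivAt_F1R {x : ℝ} (h1 : x ^ 2 - 1 ≠ 0) (h2 : 3 * x ^ 2 - 8 ≠ 0) :
    HasDerivAt F1R (F2R x) x := by
  have ha : HasDerivAt (fun y : ℝ => y ^ 2 - 1) ((2:ℕ) * x ^ 1) x := by
    simpa using (hasDerivAt_pow 2 x).sub_const 1
  have hb : HasDerivAt (fun y : ℝ => 3 * y ^ 2 - 8) (3 * ((2:ℕ) * x ^ 1)) x := by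
    simpa using ((hasDerivAt_pow 2 x).const_mul 3).sub_const 8
  have hn1 : HasDerivAt (fun y : ℝ => 4 * y) (4 * 1) x := (hasDerivAt_id x).const_mul 4
  have hn2 : HasDerivAt (fun y : ℝ => 6 * y) (6 * 1) x := (hasDerivAt_id x).const_mul 6
  have H := (hn1.div ha h1).sub (hn2.div hb h2)
  refine H.congr_deriv (Eq.symm ?_)
  unfold F2R
  field_simp
  ring

lemma hasDerivAt_F2L {x : ℝ} (hx : 0 < x) : HasDerivAt F2L (F3L x) x := by
  have hs0 : 0 < Real.sqrt x := Real.sqrt_pos.mpr hx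
  set s := Real.sqrt x with hsdef
  have hd : HasDerivAt Real.sqrt (1 / (2 * s)) x := Real.hasDerivAt_sqrt hx.ne'
  have hne1 : (1 + s) ≠ 0 := by positivity
  have hne2 : (1 + 2 * s) ≠ 0 := by positivity
  have hne3 : (1 + x) ≠ 0 := by positivity
  have hn : HasDerivAt (fun y => 3 + 4 * Real.sqrt y) (4 * (1 / (2 * s))) x :=
    (hd.const_mul 4).const_add 3
  have ha : HasDerivAt (fun y => 2 * Real.sqrt y) (2 * (1 / (2 * s))) x := hd.const_mul 2
  have hb : HasDerivAt (fun y => (1 + Real.sqrt y) ^ 2) (2 * (1 + s) ^ 1 * (1 / (2 * s))) x :=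
    (hd.const_add 1).pow 2
  have hc : HasDerivAt (fun y => (1 + 2 * Real.sqrt y) ^ 2)
      (2 * (1 + 2 * s) ^ 1 * (2 * (1 / (2 * s)))) x := ((hd.const_mul 2).const_add 1).pow 2
  have hdd := (ha.mul hb).mul hc
  have hdne : 2 * s * (1 + s) ^ 2 * (1 + 2 * s) ^ 2 ≠ 0 := by positivity
  have hq := (hn.div hdd hdne).neg
  have h2 : HasDerivAt (fun y : ℝ => 2 / (1 + y) ^ 2)
      ((0 * (1 + x) ^ 2 - 2 * (2 * (1 + x) ^ 1 * 1)) / ((1 + x) ^ 2) ^ 2) x :=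
    (hasDerivAt_const x 2).div (((hasDerivAt_id x).const_add 1).pow 2) (by positivity)
  have H := hq.sub h2
  refine H.congr_deriv (Eq.symm ?_)
  simp only [Pi.mul_apply]
  unfold F3L
  rw [← hsdef]
  field_simp
  ring

lemma hasDerivAt_F2R {x : ℝ} (h1 : x ^ 2 - 1 ≠ 0) (h2 : 3 * x ^ 2 - 8 ≠ 0) :
    HasDerivAt F2R (F3R x) x := by
  have ha : HasDerivAt (fun y : ℝ => y ^ 2 - 1) ((2:ℕ) * x ^ 1) x := by
    simpa using (hasDerivAt_pow 2 x).sub_const 1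
  have hb : HasDerivAt (fun y : ℝ => 3 * y ^ 2 - 8) (3 * ((2:ℕ) * x ^ 1)) x := by
    simpa using ((hasDerivAt_pow 2 x).const_mul 3).sub_const 8
  have ha2 : HasDerivAt (fun y : ℝ => (y ^ 2 - 1) ^ 2)
      (2 * (x ^ 2 - 1) ^ 1 * ((2:ℕ) * x ^ 1)) x := ha.pow 2
  have hb2 : HasDerivAt (fun y : ℝ => (3 * y ^ 2 - 8) ^ 2)
      (2 * (3 * x ^ 2 - 8) ^ 1 * (3 * ((2:ℕ) * x ^ 1))) x := hb.pow 2
  have hn1 : HasDerivAt (fun y : ℝ => 4 * (y ^ 2 + 1)) (4 * ((2:ℕ) * x ^ 1)) x := by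
    simpa using ((hasDerivAt_pow 2 x).add_const 1).const_mul 4
  have hn2 : HasDerivAt (fun y : ℝ => 18 * y ^ 2 + 48) (18 * ((2:ℕ) * x ^ 1)) x := by
    simpa using ((hasDerivAt_pow 2 x).const_mul 18).add_const 48
  have H := ((hn1.div ha2 (pow_ne_zero 2 h1)).neg).add (hn2.div hb2 (pow_ne_zero 2 h2))
  refine H.congr_deriv (Eq.symm ?_)
  unfold F3R
  field_simp
  ring

lemma vF1 : F1L 4 = F1R 4 := by norm_num [F1L, F1R, sqrt4]

lemma vF2 : F2L 4 = F2R 4 := by norm_num [F2L, F2R, sqrt4]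

lemma contF3L {x : ℝ} (hx : 0 < x) : ContinuousAt F3L x := by
  have hs0 : 0 < Real.sqrt x := Real.sqrt_pos.mpr hx
  unfold F3L
  exact ((ContinuousAt.div (by fun_prop) (by fun_prop) (by positivity)).add
    (ContinuousAt.div (by fun_prop) (by fun_prop) (by positivity)))

lemma contF3R {x : ℝ} (h1 : x ^ 2 - 1 ≠ 0) (h2 : 3 * x ^ 2 - 8 ≠ 0) : ContinuousAt F3R x := by
  have c1 : ContinuousAt (fun y : ℝ => 8 * y * (y ^ 2 + 3)) x := by fun_prop
  have c2 : ContinuousAt (fun y : ℝ => (y ^ 2 - 1) ^ 3) x := by fun_prop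
  have c3 : ContinuousAt (fun y : ℝ => 108 * y * (y ^ 2 + 8)) x := by fun_prop
  have c4 : ContinuousAt (fun y : ℝ => (3 * y ^ 2 - 8) ^ 3) x := by fun_prop
  exact (c1.div c2 (pow_ne_zero 3 h1)).sub (c3.div c4 (pow_ne_zero 3 h2))

lemma denoms_pos {x : ℝ} (hx : (4:ℝ) ≤ x) : x ^ 2 - 1 ≠ 0 ∧ 3 * x ^ 2 - 8 ≠ 0 := by
  constructor <;> nlinarith

theorem free_energy_third_order_transition :
    ∃ F1 F2 F3 : ℝ → ℝ,
      (∀ ν ∈ Set.Ioi (0 : ℝ), HasDerivAt freeEnergy5 (F1 ν) ν) ∧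
      (∀ ν ∈ Set.Ioi (0 : ℝ), HasDerivAt F1 (F2 ν) ν) ∧
      (∀ ν ∈ Set.Ioi (0 : ℝ), ν ≠ 4 → HasDerivAt F2 (F3 ν) ν) ∧
      ContinuousOn F3 (Set.Ioi 0 \ {4}) ∧
      ∃ L R : ℝ, L ≠ R ∧
        Tendsto F3 (nhdsWithin 4 (Set.Iio 4)) (nhds L) ∧
        Tendsto F3 (nhdsWithin 4 (Set.Ioi 4)) (nhds R) := by
  refine ⟨F1d, F2d, F3d, ?_, ?_, ?_, ?_, ?_⟩
  · -- first derivative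
    intro ν hν
    rcases lt_trichotomy ν 4 with hlt | heq | hgt
    · have hev : freeEnergy5 =ᶠ[nhds ν] gLeft :=
        eventually_of_mem (isOpen_Ioo.mem_nhds ⟨hν, hlt⟩) (fun y hy => feq_left hy.1 hy.2.le)
      have H := (hasDerivAt_gLeft hν).congr_of_eventuallyEq hev
      have e : F1d ν = F1L ν := by unfold F1d; rw [if_pos hlt.le]
      rw [e]; exact H
    · subst heq
      have hl : HasDerivWithinAt freeEnergy5 (F1L 4) (Ioc 0 4) 4 :=
        ((hasDerivAt_gLeft (by norm_num)).hasDerivWithinAt).congr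
          (fun y hy => feq_left hy.1 hy.2) (feq_left (by norm_num) le_rfl)
      have hr0 : HasDerivWithinAt freeEnergy5 (F1R 4) (Ici 4) 4 :=
        ((hasDerivAt_gRight (by norm_num) (by norm_num)).hasDerivWithinAt).congr
          (fun y hy => by
            rcases eq_or_lt_of_le (mem_Ici.mp hy) with h | h
            · rw [← h]; exact feq4
            · exact feq_right h) feq4
      have hr : HasDerivWithinAt freeEnergy5 (F1L 4) (Ici 4) 4 := by rw [vF1]; exact hr0
      have hu := hl.union hr
      have hset : Ioc (0:ℝ) 4 ∪ Ici 4 = Ioi 0 := by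
        ext y
        simp only [mem_union, mem_Ioc, mem_Ici, mem_Ioi]
        constructor
        · rintro (⟨h, _⟩ | h)
          · exact h
          · linarith
        · intro h
          rcases le_or_gt y 4 with h4 | h4
          · exact Or.inl ⟨h, h4⟩
          · exact Or.inr h4.le
      rw [hset] at hu
      have H := hu.hasDerivAt (isOpen_Ioi.mem_nhds (by norm_num))
      have e : F1d 4 = F1L 4 := by unfold F1d; rw [if_pos le_rfl]
      rw [e]; exact H
    · obtain ⟨h1, h2⟩ := denoms_pos hgt.le
      have hev : freeEnergy5 =ᶠ[nhds ν] gRight :=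
        eventually_of_mem (isOpen_Ioi.mem_nhds hgt) (fun y hy => feq_right hy)
      have H := (hasDerivAt_gRight h1 h2).congr_of_eventuallyEq hev
      have e : F1d ν = F1R ν := by unfold F1d; rw [if_neg (not_le.mpr hgt)]
      rw [e]; exact H
  · -- second derivative
    intro ν hν
    rcases lt_trichotomy ν 4 with hlt | heq | hgt
    · have hev : F1d =ᶠ[nhds ν] F1L :=
        eventually_of_mem (Iio_mem_nhds hlt) (fun y hy => by unfold F1d; rw [if_pos (le_of_lt hy)])
      have H := (hasDerivAt_F1L hν).congr_of_eventuallyEq hev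
      have e : F2d ν = F2L ν := by unfold F2d; rw [if_pos hlt.le]
      rw [e]; exact H
    · subst heq
      have hl : HasDerivWithinAt F1d (F2L 4) (Iic 4) 4 :=
        ((hasDerivAt_F1L (by norm_num)).hasDerivWithinAt).congr
          (fun y hy => by unfold F1d; rw [if_pos (mem_Iic.mp hy)])
          (by unfold F1d; rw [if_pos le_rfl])
      have hr0 : HasDerivWithinAt F1d (F2R 4) (Ici 4) 4 :=
        ((hasDerivAt_F1R (by norm_num) (by norm_num)).hasDerivWithinAt).congr
          (fun y hy => by
            rcases eq_or_lt_of_le (mem_Ici.mp hy) with h | h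
            · rw [← h]; unfold F1d; rw [if_pos le_rfl]; exact vF1
            · unfold F1d; rw [if_neg (not_le.mpr h)])
          (by unfold F1d; rw [if_pos le_rfl]; exact vF1)
      have hr : HasDerivWithinAt F1d (F2L 4) (Ici 4) 4 := by rw [vF2]; exact hr0
      have hu := hl.union hr
      rw [Iic_union_Ici] at hu
      have H := hu.hasDerivAt univ_mem
      have e : F2d 4 = F2L 4 := by unfold F2d; rw [if_pos le_rfl]
      rw [e]; exact H
    · obtain ⟨h1, h2⟩ := denoms_pos hgt.le
      have hev : F1d =ᶠ[nhds ν] F1R :=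
        eventually_of_mem (isOpen_Ioi.mem_nhds hgt)
          (fun y hy => by unfold F1d; rw [if_neg (not_le.mpr hy)])
      have H := (hasDerivAt_F1R h1 h2).congr_of_eventuallyEq hev
      have e : F2d ν = F2R ν := by unfold F2d; rw [if_neg (not_le.mpr hgt)]
      rw [e]; exact H
  · -- third derivative away from 4
    intro ν hν hne
    rcases lt_or_gt_of_ne hne with hlt | hgt
    · have hev : F2d =ᶠ[nhds ν] F2L :=
        eventually_of_mem (Iio_mem_nhds hlt) (fun y hy => by unfold F2d; rw [if_pos (le_of_lt hy)])
      have H := (hasDerivAt_F2L hν).congr_of_eventuallyEq hev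
      have e : F3d ν = F3L ν := by unfold F3d; rw [if_pos hlt.le]
      rw [e]; exact H
    · obtain ⟨h1, h2⟩ := denoms_pos hgt.le
      have hev : F2d =ᶠ[nhds ν] F2R :=
        eventually_of_mem (isOpen_Ioi.mem_nhds hgt)
          (fun y hy => by unfold F2d; rw [if_neg (not_le.mpr hy)])
      have H := (hasDerivAt_F2R h1 h2).congr_of_eventuallyEq hev
      have e : F3d ν = F3R ν := by unfold F3d; rw [if_neg (not_le.mpr hgt)]
      rw [e]; exact H
  · -- continuity of F3 off 4
    intro x hx
    have hx0 : 0 < x := hx.1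
    have hxne : x ≠ 4 := hx.2
    apply ContinuousAt.continuousWithinAt
    rcases lt_or_gt_of_ne hxne with hlt | hgt
    · refine (contF3L hx0).congr ?_
      exact eventually_of_mem (Iio_mem_nhds hlt)
        (fun y hy => by unfold F3d; rw [if_pos (le_of_lt hy)])
    · obtain ⟨h1, h2⟩ := denoms_pos hgt.le
      refine (contF3R h1 h2).congr ?_
      exact eventually_of_mem (isOpen_Ioi.mem_nhds hgt)
        (fun y hy => by unfold F3d; rw [if_neg (not_le.mpr hy)])
  · -- jump of the third derivative
    refine ⟨797 / 21600, 49 / 2700, by norm_num, ?_, ?_⟩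
    · have h1 : Tendsto F3L (nhdsWithin 4 (Iio 4)) (nhds (F3L 4)) :=
        ((contF3L (by norm_num)).tendsto).mono_left nhdsWithin_le_nhds
      have h2 : F3L 4 = 797 / 21600 := by norm_num [F3L, sqrt4]
      rw [h2] at h1
      refine Filter.Tendsto.congr' ?_ h1
      exact eventually_of_mem self_mem_nhdsWithin
        (fun y hy => by unfold F3d; rw [if_pos (le_of_lt hy)])
    · have h1 : Tendsto F3R (nhdsWithin 4 (Ioi 4)) (nhds (F3R 4)) :=
        ((contF3R (by norm_num) (by norm_num)).tendsto).mono_left nhdsWithin_le_nhds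
      have h2 : F3R 4 = 49 / 2700 := by norm_num [F3R]
      rw [h2] at h1
      refine Filter.Tendsto.congr' ?_ h1
      exact eventually_of_mem self_mem_nhdsWithin
        (fun y hy => by unfold F3d; rw [if_neg (not_le.mpr hy)])
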